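/- arXiv:2512.23911 — 2 statements merged into one kernel-verified Lean document; each statement's English description precedes it below -/
import Mathlib

section
/- Let A be a simple C*-algebra. Then the Pedersen ideal Ped(A) is algebraically simple, i.e., Ped(A) has no nonzero proper (algebraic, not necessarily closed) two-sided ideals. -/
/-- A (not necessarily closed) two-sided ideal of the (non-unital) ring carried
by a subset `P` of `A`: an additive subgroup of `A` contained in `P` which
absorbs multiplication by elements of `P` on both sides. -/
def IsRingIdealOf {A : Type*} [NonUnitalRing A] (P J : Set A) : Prop :=
  J ⊆ P ∧ (0 : A) ∈ J ∧ (∀ x ∈ J, ∀ y ∈ J, x + y ∈ J) ∧ (∀ x ∈ J, -x ∈ J) ∧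
    (∀ p ∈ P, ∀ x ∈ J, p * x ∈ J ∧ x * p ∈ J)

/-- The closure of a two-sided ideal in a topological ring is again a two-sided ideal. -/
noncomputable def clIdeal {A : Type*} [NonUnitalCStarAlgebra A] (I : TwoSidedIdeal A) :
    TwoSidedIdeal A :=
  TwoSidedIdeal.mk' (closure (I : Set A))
    (subset_closure I.zero_mem)
    (fun {x y} hx hy => map_mem_closure₂ continuous_add hx hy
      (fun a ha b hb => I.add_mem ha hb))
    (fun {x} hx => map_mem_closure continuous_neg hx (fun a ha => I.neg_mem ha))
    (fun {x y} hy => map_mem_closure (continuous_mul_left x) hy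
      (fun a ha => I.mul_mem_left x a ha))
    (fun {x y} hx => map_mem_closure (f := (· * y)) (continuous_mul_right y) hx
      (fun a ha => I.mul_mem_right a y ha))

lemma mem_clIdeal {A : Type*} [NonUnitalCStarAlgebra A] (I : TwoSidedIdeal A) (x : A) :
    x ∈ clIdeal I ↔ x ∈ closure (I : Set A) :=
  TwoSidedIdeal.mem_mk' _ _ _ _ _ _ x

/-- In a simple C*-algebra, any nonzero two-sided ideal is dense. -/
lemma dense_of_ne_zero {A : Type*} [NonUnitalCStarAlgebra A]
    (hsimple : ∀ I : TwoSidedIdeal A, IsClosed (I : Set A) → I = ⊥ ∨ I = ⊤)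
    (I : TwoSidedIdeal A) {x : A} (hx : x ∈ I) (hx0 : x ≠ 0) : Dense (I : Set A) := by
  have hcl : (clIdeal I : Set A) = closure (I : Set A) := by
    ext y; exact mem_clIdeal I y
  have hclosed : IsClosed (clIdeal I : Set A) := by rw [hcl]; exact isClosed_closure
  rcases hsimple (clIdeal I) hclosed with h | h
  · exfalso
    have : x ∈ clIdeal I := (mem_clIdeal I x).mpr (subset_closure hx)
    rw [h] at this
    exact hx0 ((TwoSidedIdeal.mem_bot A).mp this)
  · rw [dense_iff_closure_eq, ← hcl, h]
    exact Set.eq_univ_of_forall fun y => TwoSidedIdeal.mem_top A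

/-- If `A` is a simple C*-algebra (no nontrivial closed two-sided ideals) and
`P` is its Pedersen ideal (the minimal dense two-sided ideal of `A`), then `P`
is algebraically simple: every (algebraic, not necessarily closed) two-sided
ideal of the ring `P` is `{0}` or `P`. -/
theorem stmt5 {A : Type*} [NonUnitalCStarAlgebra A]
    (hsimple : ∀ I : TwoSidedIdeal A, IsClosed (I : Set A) → I = ⊥ ∨ I = ⊤)
    (P : TwoSidedIdeal A) (hPdense : Dense (P : Set A))
    (hPmin : ∀ I : TwoSidedIdeal A, Dense (I : Set A) → P ≤ I) :
    ∀ J : Set A, IsRingIdealOf (P : Set A) J → J = {0} ∨ J = (P : Set A) := by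
  intro J hJ
  obtain ⟨hJP, h0, hadd, hneg, habs⟩ := hJ
  by_cases hz : ∀ x ∈ J, x = 0
  · left
    exact Set.eq_singleton_iff_unique_mem.mpr ⟨h0, hz⟩
  right
  push_neg at hz
  obtain ⟨j, hj, hj0⟩ := hz
  have hjP : j ∈ P := hJP hj
  -- Step 1: the set of `a` with `P * a * P ⊆ J` is a two-sided ideal of `A`.
  set I1 : TwoSidedIdeal A := TwoSidedIdeal.mk'
    {a : A | ∀ p ∈ P, ∀ q ∈ P, p * a * q ∈ J}
    (fun p _ q _ => by simpa using h0)
    (fun {x y} hx hy p hp q hq => by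
      have : p * (x + y) * q = p * x * q + p * y * q := by noncomm_ring
      rw [this]; exact hadd _ (hx p hp q hq) _ (hy p hp q hq))
    (fun {x} hx p hp q hq => by
      have : p * (-x) * q = -(p * x * q) := by noncomm_ring
      rw [this]; exact hneg _ (hx p hp q hq))
    (fun {x y} hy p hp q hq => by
      have : p * (x * y) * q = (p * x) * y * q := by noncomm_ring
      rw [this]; exact hy (p * x) (P.mul_mem_right p x hp) q hq)
    (fun {x y} hx p hp q hq => by
      have : p * (x * y) * q = p * x * (y * q) := by noncomm_ring
      rw [this]; exact hx p hp (y * q) (P.mul_mem_left y q hq)) with hI1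
  have hmemI1 : ∀ a : A, a ∈ I1 ↔ ∀ p ∈ P, ∀ q ∈ P, p * a * q ∈ J := fun a =>
    TwoSidedIdeal.mem_mk' _ _ _ _ _ _ a
  have hjI1 : j ∈ I1 := (hmemI1 j).mpr fun p hp q hq =>
    (habs q hq (p * j) ((habs p hp j hj).1)).2
  have hI1dense : Dense (I1 : Set A) := dense_of_ne_zero hsimple I1 hjI1 hj0
  have hPPP : ∀ x ∈ P, ∀ p ∈ P, ∀ q ∈ P, p * x * q ∈ J := fun x hx =>
    (hmemI1 x).mp (hPmin I1 hI1dense hx)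
  -- Step 2: the additive group generated by `P * P * P` is a two-sided ideal of `A`
  -- contained in `J`, and it is dense.
  set S : Set A := {x : A | ∃ p ∈ P, ∃ y ∈ P, ∃ q ∈ P, x = p * y * q} with hS
  have hmulS : ∀ x : A, ∀ y ∈ AddSubgroup.closure S, x * y ∈ AddSubgroup.closure S := by
    intro x y hy
    refine AddSubgroup.closure_induction
      (p := fun g _ => x * g ∈ AddSubgroup.closure S) (fun z hz => ?_)
      (show x * 0 ∈ _ by rw [mul_zero]; exact AddSubgroup.zero_mem _)
      (fun a b _ _ ha hb => show x * (a + b) ∈ _ by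
        rw [mul_add]; exact AddSubgroup.add_mem _ ha hb)
      (fun a _ ha => show x * (-a) ∈ _ by
        rw [mul_neg]; exact AddSubgroup.neg_mem _ ha) hy
    obtain ⟨p, hp, w, hw, q, hq, rfl⟩ := hz
    refine AddSubgroup.subset_closure ⟨x * p, P.mul_mem_left x p hp, w, hw, q, hq, ?_⟩
    noncomm_ring
  have hmulS' : ∀ y ∈ AddSubgroup.closure S, ∀ x : A, y * x ∈ AddSubgroup.closure S := by
    intro y hy x
    refine AddSubgroup.closure_induction
      (p := fun g _ => g * x ∈ AddSubgroup.closure S) (fun z hz => ?_)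
      (show (0 : A) * x ∈ _ by rw [zero_mul]; exact AddSubgroup.zero_mem _)
      (fun a b _ _ ha hb => show (a + b) * x ∈ _ by
        rw [add_mul]; exact AddSubgroup.add_mem _ ha hb)
      (fun a _ ha => show (-a) * x ∈ _ by
        rw [neg_mul]; exact AddSubgroup.neg_mem _ ha) hy
    obtain ⟨p, hp, w, hw, q, hq, rfl⟩ := hz
    refine AddSubgroup.subset_closure ⟨p, hp, w, hw, q * x, P.mul_mem_right q x hq, ?_⟩
    noncomm_ring
  set T : TwoSidedIdeal A := TwoSidedIdeal.mk'
    ((AddSubgroup.closure S : AddSubgroup A) : Set A)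
    (AddSubgroup.zero_mem _)
    (fun {x y} hx hy => AddSubgroup.add_mem _ hx hy)
    (fun {x} hx => AddSubgroup.neg_mem _ hx)
    (fun {x y} hy => hmulS x y hy)
    (fun {x y} hx => hmulS' x hx y) with hT
  have hmemT : ∀ a : A, a ∈ T ↔ a ∈ AddSubgroup.closure S := fun a =>
    TwoSidedIdeal.mem_mk' _ _ _ _ _ _ a
  -- a nonzero element of S
  set a : A := star j * j with ha
  have haP : a ∈ P := P.mul_mem_left (star j) j hjP
  have ha0 : a ≠ 0 := by
    intro h
    apply hj0
    rw [← norm_eq_zero, ← mul_self_eq_zero, ← CStarRing.norm_star_mul_self, ← ha, h, norm_zero]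
  have hastar : star a = a := by rw [ha, star_mul, star_star]
  have ha3 : a * a * a ≠ 0 := by
    intro h
    apply ha0
    have h4 : a * a * (a * a) = 0 := by
      rw [show a * a * (a * a) = (a * a * a) * a by noncomm_ring, h, zero_mul]
    have hn2 : ‖a * a‖ = ‖a‖ * ‖a‖ := by
      rw [← CStarRing.norm_star_mul_self (x := a), hastar]
    have hn4 : ‖a * a * (a * a)‖ = ‖a * a‖ * ‖a * a‖ := by
      rw [← CStarRing.norm_star_mul_self (x := a * a), star_mul, hastar]
    rw [h4, norm_zero] at hn4
    have h5 : ‖a‖ * ‖a‖ * (‖a‖ * ‖a‖) = 0 := by rw [← hn2]; exact hn4.symm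
    have h6 : ‖a‖ = 0 := mul_self_eq_zero.mp (mul_self_eq_zero.mp h5)
    rwa [norm_eq_zero] at h6
  have ha3T : a * a * a ∈ T := (hmemT _).mpr
    (AddSubgroup.subset_closure ⟨a, haP, a, haP, a, haP, rfl⟩)
  have hTdense : Dense (T : Set A) := dense_of_ne_zero hsimple T ha3T ha3
  -- P ⊆ T and the carrier of T is contained in J
  have hTJ : ∀ x ∈ AddSubgroup.closure S, x ∈ J := by
    intro x hx
    refine AddSubgroup.closure_induction (p := fun g _ => g ∈ J) (fun z hz => ?_) h0
      (fun u v _ _ hu hv => hadd u hu v hv) (fun u _ hu => hneg u hu) hx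
    obtain ⟨p, hp, w, hw, q, hq, rfl⟩ := hz
    exact hPPP w hw p hp q hq
  refine Set.Subset.antisymm hJP fun x hx => ?_
  exact hTJ x ((hmemT x).mp (hPmin T hTdense hx))
end

section
/- Let b_n (n ∈ ℕ) be elements of a C*-algebra with b_n positive, ‖b_n‖ < 1/2^n, and b_n b_m = 0 for n ≠ m. Then the series y = Σ_{n=1}^∞ b_n converges in norm, y is positive, and for any dimension function d_τ (associated to a lower semicontinuous 2-quasitrace τ), d_τ(y) = Σ_{n=1}^∞ d_τ(b_n). -/
open scoped ENNReal

/-- The standard piecewise linear cutoff function `f_ε`. -/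
noncomputable def fCut (ε t : ℝ) : ℝ := min 1 (max 0 ((t - ε) / ε))

/-- The dimension function `d_τ(a) = lim_{ε→0} τ(f_ε(a))` of a lower
semicontinuous 2-quasitrace `τ`. -/
noncomputable def dFun {B : Type*} [NonUnitalCStarAlgebra B] [PartialOrder B]
    [StarOrderedRing B] (τ : B → ℝ≥0∞) (a : B) : ℝ≥0∞ :=
  ⨆ n : ℕ, τ (cfcₙ (fun t => fCut (1 / (n + 1)) t) a)

namespace Stmt18Aux

/-! ### Elementary facts about `fCut` -/

lemma fCut_continuous {ε : ℝ} (hε : 0 < ε) : Continuous (fCut ε) := by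
  unfold fCut
  fun_prop

lemma fCut_zero {ε : ℝ} (hε : 0 < ε) : fCut ε 0 = 0 := by
  have h : (0 - ε) / ε = -1 := by field_simp; ring
  rw [fCut, h]
  norm_num

lemma fCut_nonneg (ε t : ℝ) : 0 ≤ fCut ε t :=
  le_min zero_le_one (le_max_left 0 _)

lemma fCut_eq_zero {ε t : ℝ} (hε : 0 < ε) (ht : t ≤ ε) : fCut ε t = 0 := by
  have h : (t - ε) / ε ≤ 0 := div_nonpos_iff.mpr (Or.inr ⟨sub_nonpos.mpr ht, hε.le⟩)
  rw [fCut, max_eq_left h, min_eq_right zero_le_one]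

lemma fCut_mono_eps {ε ε' t : ℝ} (hε' : 0 < ε') (h : ε' ≤ ε) (ht : 0 ≤ t) :
    fCut ε t ≤ fCut ε' t := by
  have hε : 0 < ε := lt_of_lt_of_le hε' h
  refine min_le_min le_rfl (max_le_max le_rfl ?_)
  rw [sub_div, div_self hε.ne', sub_div, div_self hε'.ne']
  have : t / ε ≤ t / ε' := by gcongr
  linarith

/-! ### C⋆-algebra auxiliary lemmas -/

open ContinuousMapZero

variable {B : Type*} [NonUnitalCStarAlgebra B] [PartialOrder B] [StarOrderedRing B]

local notation "σₙ" => quasispectrum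

lemma mem_Icc_of_quasispectrum {a : B} (ha : 0 ≤ a) {t : ℝ} (ht : t ∈ σₙ ℝ a) :
    t ∈ Set.Icc 0 ‖a‖ := by
  have ha' : IsSelfAdjoint a := .of_nonneg ha
  have h1 : 0 ≤ t := quasispectrum_nonneg_of_nonneg a ha t ht
  have h2 : ‖(id : ℝ → ℝ) t‖ ≤ ‖cfcₙ (id : ℝ → ℝ) a‖ :=
    norm_apply_le_norm_cfcₙ (id : ℝ → ℝ) a ht
  rw [cfcₙ_id ℝ a] at h2
  exact ⟨h1, le_trans (le_abs_self t) h2⟩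

lemma mul_comm_of_orth {a c : B} (ha : 0 ≤ a) (hc : 0 ≤ c) (hac : a * c = 0) :
    c * a = 0 := by
  have := congrArg star hac
  simpa [star_mul, (IsSelfAdjoint.of_nonneg ha).star_eq,
    (IsSelfAdjoint.of_nonneg hc).star_eq] using this

set_option maxHeartbeats 1000000 in
/-- Orthogonality of positive elements propagates through the continuous functional
calculus. -/
lemma cfcₙ_mul_eq_zero_of_orth {a c : B} (ha : 0 ≤ a) (hc : 0 ≤ c) (hac : a * c = 0)
    (f g : ℝ → ℝ) (hf : Continuous f) (hg : Continuous g)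
    (hf0 : f 0 = 0) (hg0 : g 0 = 0) :
    cfcₙ f a * cfcₙ g c = 0 := by
  have ha' : IsSelfAdjoint a := .of_nonneg ha
  have hc' : IsSelfAdjoint c := .of_nonneg hc
  have hca : c * a = 0 := mul_comm_of_orth ha hc hac
  rw [cfcₙ_apply f a hf.continuousOn hf0 ha', cfcₙ_apply g c hg.continuousOn hg0 hc']
  set F : C(σₙ ℝ a, ℝ)₀ := ⟨⟨_, hf.continuousOn.restrict⟩, hf0⟩
  set G : C(σₙ ℝ c, ℝ)₀ := ⟨⟨_, hg.continuousOn.restrict⟩, hg0⟩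
  have hida : cfcₙHom (R := ℝ) ha' (ContinuousMapZero.id _) = a := cfcₙHom_id ha'
  have hidc : cfcₙHom (R := ℝ) hc' (ContinuousMapZero.id _) = c := cfcₙHom_id hc'
  refine F.nonUnitalStarAlgHom_apply_mul_eq_zero (cfcₙHom ha') _ ?_ ?_
    (cfcₙHom_continuous ha') <;>
  · try rw [star_trivial]
    refine G.mul_nonUnitalStarAlgHom_apply_eq_zero (cfcₙHom hc') _ ?_ ?_
      (cfcₙHom_continuous hc') <;>
    simp only [star_trivial, hida, hidc, hac]

/-- Additivity of the continuous functional calculus on orthogonal positive elements. -/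
lemma cfcₙ_add_of_orth {a c : B} (ha : 0 ≤ a) (hc : 0 ≤ c) (hac : a * c = 0)
    (f : ℝ → ℝ) (hf : Continuous f) (hf0 : f 0 = 0) :
    cfcₙ f (a + c) = cfcₙ f a + cfcₙ f c := by
  have ha' : IsSelfAdjoint a := .of_nonneg ha
  have hc' : IsSelfAdjoint c := .of_nonneg hc
  have hacsa : IsSelfAdjoint (a + c) := ha'.add hc'
  have hca : c * a = 0 := mul_comm_of_orth ha hc hac
  let s : Set ℝ := σₙ ℝ (a + c) ∪ σₙ ℝ a ∪ σₙ ℝ c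
  have hs : CompactSpace s := by
    refine isCompact_iff_compactSpace.mp <| (IsCompact.union ?_ ?_).union ?_
    all_goals
      exact NonUnitalContinuousFunctionalCalculus.isCompact_quasispectrum
        (R := ℝ) (p := IsSelfAdjoint) _
  obtain ⟨hacs, has, hcs⟩ : σₙ ℝ (a + c) ⊆ s ∧ σₙ ℝ a ⊆ s ∧ σₙ ℝ c ⊆ s := by
    refine ⟨?_, ?_, ?_⟩ <;> intro x hx <;> simp [s, hx]
  haveI : Fact (0 ∈ s) := ⟨Or.inl <| Or.inl <| quasispectrum.zero_mem ℝ (a + c)⟩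
  have s0 : (0 : s) = (0 : ℝ) := rfl
  have mul₁ (F G : C(s, ℝ)₀) :
      (cfcₙHomSuperset ha' has F) * (cfcₙHomSuperset hc' hcs G) = 0 := by
    refine F.nonUnitalStarAlgHom_apply_mul_eq_zero _ _ ?id ?star_id
      (cfcₙHomSuperset_continuous ha' has)
    case' star_id => rw [star_trivial]
    all_goals
      refine G.mul_nonUnitalStarAlgHom_apply_eq_zero _ _ ?_ ?_
        (cfcₙHomSuperset_continuous hc' hcs)
      all_goals simp only [star_trivial, cfcₙHomSuperset_id ha' has,
        cfcₙHomSuperset_id hc' hcs, hac]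
  have mul₂ (F G : C(s, ℝ)₀) :
      (cfcₙHomSuperset hc' hcs F) * (cfcₙHomSuperset ha' has G) = 0 := by
    simpa only [star_mul, star_zero, ← map_star, star_trivial] using congr(star $(mul₁ G F))
  let ψ : C(s, ℝ)₀ →⋆ₙₐ[ℝ] B :=
    { (cfcₙHomSuperset ha' has : C(s, ℝ)₀ →ₗ[ℝ] B) +
        (cfcₙHomSuperset hc' hcs : C(s, ℝ)₀ →ₗ[ℝ] B) with
      toFun := cfcₙHomSuperset ha' has + cfcₙHomSuperset hc' hcs
      map_zero' := by simp [-cfcₙHomSuperset_apply]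
      map_mul' := fun F G ↦ by
        simp only [Pi.add_apply, map_mul, mul_add, add_mul, mul₂, add_zero, mul₁, zero_add]
      map_star' := fun F ↦ by simp [← map_star] }
  have key : (cfcₙHomSuperset hacsa hacs) = ψ :=
    @ContinuousMapZero.UniqueHom.eq_of_continuous_of_map_id ℝ B
      _ _ _ _ _ _ _ _ _ inferInstance inferInstance _ s hs _
      (cfcₙHomSuperset hacsa hacs) ψ (cfcₙHomSuperset_continuous hacsa hacs)
      ((cfcₙHomSuperset_continuous ha' has).add (cfcₙHomSuperset_continuous hc' hcs))
      (by simp only [ψ, NonUnitalStarAlgHom.coe_mk', NonUnitalAlgHom.coe_mk, Pi.add_apply,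
            cfcₙHomSuperset_id ha' has, cfcₙHomSuperset_id hc' hcs,
            cfcₙHomSuperset_id hacsa hacs]
          exact (congrArg₂ (· + ·) (cfcₙHomSuperset_id ha' has) (cfcₙHomSuperset_id hc' hcs)).symm)
  let F : C(s, ℝ)₀ := ⟨⟨fun x : s => f x, by fun_prop⟩, by
    show f ((0 : s) : ℝ) = 0
    rw [s0]; exact hf0⟩
  have happ (x : B) (hx' : IsSelfAdjoint x) (hxs : σₙ ℝ x ⊆ s) :
      cfcₙHomSuperset hx' hxs F = cfcₙ f x := by
    rw [cfcₙ_apply f x hf.continuousOn hf0 hx', cfcₙHomSuperset_apply]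
    exact congrArg (cfcₙHom hx') (ContinuousMapZero.ext fun x => rfl)
  have hFkey := congr($key F)
  rw [happ _ hacsa hacs] at hFkey
  calc cfcₙ f (a + c) = ψ F := hFkey
    _ = cfcₙ f a + cfcₙ f c := by
        show cfcₙHomSuperset ha' has F + cfcₙHomSuperset hc' hcs F = _
        rw [happ _ ha' has, happ _ hc' hcs]

lemma cfcₙ_eq_zero_of_norm_le {a : B} (ha : 0 ≤ a) {ε : ℝ} (hε : 0 < ε)
    (hnorm : ‖a‖ ≤ ε) : cfcₙ (fCut ε) a = 0 := by
  have h : (σₙ ℝ a).EqOn (fCut ε) 0 := fun t ht => by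
    have := mem_Icc_of_quasispectrum ha ht
    exact fCut_eq_zero hε (this.2.trans hnorm)
  rw [cfcₙ_congr h, cfcₙ_zero]

/-- Monotonicity of `τ ∘ cfcₙ · a` along pointwise order of functions. -/
lemma tau_cfcₙ_mono (τ : B → ℝ≥0∞)
    (hτadd : ∀ x y : B, 0 ≤ x → 0 ≤ y → x * y = y * x → τ (x + y) = τ x + τ y)
    {a : B} (ha : 0 ≤ a) {f g : ℝ → ℝ} (hf : Continuous f) (hg : Continuous g)
    (hf0 : f 0 = 0) (hg0 : g 0 = 0)
    (hfg : ∀ t ∈ σₙ ℝ a, f t ≤ g t) (hf_nonneg : ∀ t, 0 ≤ f t) :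
    τ (cfcₙ f a) ≤ τ (cfcₙ g a) := by
  have ha' : IsSelfAdjoint a := .of_nonneg ha
  have hsub : Continuous fun t => g t - f t := hg.sub hf
  have hsub0 : (fun t => g t - f t) 0 = 0 := by simp [hf0, hg0]
  have hkey : cfcₙ g a = cfcₙ f a + cfcₙ (fun t => g t - f t) a := by
    rw [← cfcₙ_add f (fun t => g t - f t) a hf.continuousOn hf0 hsub.continuousOn hsub0]
    exact cfcₙ_congr fun t _ => by ring
  have h1 : 0 ≤ cfcₙ f a := cfcₙ_nonneg fun t _ => hf_nonneg t
  have h2 : 0 ≤ cfcₙ (fun t => g t - f t) a :=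
    cfcₙ_nonneg fun t ht => sub_nonneg.mpr (hfg t ht)
  have hcomm : cfcₙ f a * cfcₙ (fun t => g t - f t) a
      = cfcₙ (fun t => g t - f t) a * cfcₙ f a := by
    rw [← cfcₙ_mul f (fun t => g t - f t) a hf.continuousOn hf0 hsub.continuousOn hsub0,
      ← cfcₙ_mul (fun t => g t - f t) f a hsub.continuousOn hsub0 hf.continuousOn hf0]
    exact cfcₙ_congr fun t _ => by ring
  rw [hkey, hτadd _ _ h1 h2 hcomm]
  exact le_self_add

/-- `τ` is additive on finite sums of pairwise orthogonal nonneg elements. -/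
lemma tau_sum (τ : B → ℝ≥0∞) (hτ0 : τ 0 = 0)
    (hτadd : ∀ x y : B, 0 ≤ x → 0 ≤ y → x * y = y * x → τ (x + y) = τ x + τ y)
    (x : ℕ → B) (hx : ∀ n, 0 ≤ x n) (horth : ∀ n m, n ≠ m → x n * x m = 0) (N : ℕ) :
    τ (∑ n ∈ Finset.range N, x n) = ∑ n ∈ Finset.range N, τ (x n) := by
  induction N with
  | zero => simpa using hτ0
  | succ N ih =>
    have hsum_pos : 0 ≤ ∑ n ∈ Finset.range N, x n :=
      Finset.sum_nonneg fun n _ => hx n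
    have hmul : (∑ n ∈ Finset.range N, x n) * x N = 0 := by
      rw [Finset.sum_mul]
      exact Finset.sum_eq_zero fun n hn =>
        horth n N (Finset.mem_range.mp hn).ne
    have hmul' : x N * (∑ n ∈ Finset.range N, x n) = 0 := by
      rw [Finset.mul_sum]
      exact Finset.sum_eq_zero fun n hn =>
        horth N n (Finset.mem_range.mp hn).ne'
    rw [Finset.sum_range_succ, Finset.sum_range_succ,
      hτadd _ _ hsum_pos (hx N) (hmul.trans hmul'.symm), ih]

/-- `cfcₙ` is additive on finite sums of pairwise orthogonal nonneg elements. -/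
lemma cfcₙ_finsum_of_orth (x : ℕ → B) (hx : ∀ n, 0 ≤ x n)
    (horth : ∀ n m, n ≠ m → x n * x m = 0)
    (f : ℝ → ℝ) (hf : Continuous f) (hf0 : f 0 = 0) (N : ℕ) :
    cfcₙ f (∑ n ∈ Finset.range N, x n) = ∑ n ∈ Finset.range N, cfcₙ f (x n) := by
  induction N with
  | zero => simp
  | succ N ih =>
    have hsum_pos : 0 ≤ ∑ n ∈ Finset.range N, x n :=
      Finset.sum_nonneg fun n _ => hx n
    have hmul : (∑ n ∈ Finset.range N, x n) * x N = 0 := by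
      rw [Finset.sum_mul]
      exact Finset.sum_eq_zero fun n hn => horth n N (Finset.mem_range.mp hn).ne
    rw [Finset.sum_range_succ, Finset.sum_range_succ,
      cfcₙ_add_of_orth hsum_pos (hx N) hmul f hf hf0, ih]

end Stmt18Aux

open Stmt18Aux in
/-- If `b n` are pairwise orthogonal positive elements with `‖b n‖ < 1/2ⁿ`,
then `y = Σ b n` converges in norm, `y` is positive, and for the dimension
function `d_τ` of any lower semicontinuous 2-quasitrace `τ`,
`d_τ(y) = Σ d_τ(b n)`. -/
theorem stmt18 {B : Type*} [NonUnitalCStarAlgebra B] [PartialOrder B] [StarOrderedRing B]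
    (b : ℕ → B) (hpos : ∀ n, 0 ≤ b n) (hnorm : ∀ n, ‖b n‖ < 1 / 2 ^ (n + 1))
    (horth : ∀ n m, n ≠ m → b n * b m = 0)
    (τ : B → ℝ≥0∞)
    (hτ0 : τ 0 = 0)
    (hτtr : ∀ x : B, τ (star x * x) = τ (x * star x))
    (hτadd : ∀ x y : B, 0 ≤ x → 0 ≤ y → x * y = y * x → τ (x + y) = τ x + τ y)
    (hτlsc : LowerSemicontinuousOn τ {x : B | 0 ≤ x}) :
    Summable b ∧ 0 ≤ ∑' n, b n ∧ dFun τ (∑' n, b n) = ∑' n, dFun τ (b n) := by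
  classical
  -- summability
  have hgeom : Summable fun n : ℕ => (1 / 2 : ℝ) ^ (n + 1) :=
    (summable_geometric_two.mul_left (1 / 2)).congr fun n => by
      rw [pow_succ]; ring
  have hb_le : ∀ n, ‖b n‖ ≤ (1 / 2 : ℝ) ^ (n + 1) := fun n => by
    rw [div_pow, one_pow]; exact (hnorm n).le
  have hnorm_summable : Summable fun n => ‖b n‖ :=
    Summable.of_nonneg_of_le (fun n => norm_nonneg _) hb_le hgeom
  have hsum : Summable b := Summable.of_norm hnorm_summable
  -- positivity of (possibly junk) tsums of nonneg elements
  have htsum_nonneg : ∀ (f : ℕ → B), (∀ n, 0 ≤ f n) → 0 ≤ ∑' n, f n := by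
    intro f hf
    by_cases h : Summable f
    · exact tsum_nonneg hf
    · rw [tsum_eq_zero_of_not_summable h]
  have hy_nonneg : 0 ≤ ∑' n, b n := htsum_nonneg b hpos
  refine ⟨hsum, hy_nonneg, ?_⟩
  set y := ∑' n, b n with hy_def
  -- cutoff levels
  set ε : ℕ → ℝ := fun k => 1 / ((k : ℝ) + 1) with hε_def
  have hε_pos : ∀ k, 0 < ε k := fun k => by positivity
  -- tails
  set r : ℕ → B := fun k => ∑' n, b (n + k) with hr_def
  have hr_nonneg : ∀ k, 0 ≤ r k := fun k => htsum_nonneg _ fun n => hpos (n + k)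
  have htail_summable : ∀ k, Summable fun n => ‖b (n + k)‖ := fun k =>
    hnorm_summable.comp_injective (add_left_injective k)
  have hr_norm : ∀ k, ‖r k‖ ≤ (1 / 2 : ℝ) ^ k := by
    intro k
    have h1 : ‖r k‖ ≤ ∑' n, ‖b (n + k)‖ :=
      norm_tsum_le_tsum_norm (htail_summable k)
    have hgs : Summable fun n : ℕ => (1 / 2 : ℝ) ^ (n + k + 1) :=
      (hgeom.comp_injective (add_left_injective k)).congr fun n => rfl
    have h2 : ∑' n, ‖b (n + k)‖ ≤ ∑' n : ℕ, (1 / 2 : ℝ) ^ (n + k + 1) :=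
      Summable.tsum_le_tsum (fun n => hb_le (n + k)) (htail_summable k) hgs
    have h3 : ∑' n : ℕ, (1 / 2 : ℝ) ^ (n + k + 1) = (1 / 2 : ℝ) ^ k := by
      have heq : ∀ n : ℕ, (1 / 2 : ℝ) ^ (n + k + 1) = (1 / 2 : ℝ) ^ (k + 1) * (1 / 2) ^ n := by
        intro n; ring
      rw [tsum_congr heq, tsum_mul_left, tsum_geometric_two]
      rw [pow_succ]
      ring
    calc ‖r k‖ ≤ _ := h1
      _ ≤ _ := h2
      _ = _ := h3
  have hr_small : ∀ k, ‖r k‖ ≤ ε k := by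
    intro k
    refine (hr_norm k).trans ?_
    have h2k : (k : ℝ) + 1 ≤ 2 ^ k := by
      exact_mod_cast Nat.succ_le_of_lt (Nat.lt_two_pow_self (n := k))
    calc ((1 : ℝ) / 2) ^ k = 1 / 2 ^ k := by rw [div_pow, one_pow]
      _ ≤ ε k := one_div_le_one_div_of_le (by positivity) h2k
  -- decomposition y = partial sum + tail
  have hy_split : ∀ k, y = (∑ n ∈ Finset.range k, b n) + r k := fun k =>
    (Summable.sum_add_tsum_nat_add k hsum).symm
  -- partial sums are orthogonal to tails
  have hsr : ∀ k, (∑ n ∈ Finset.range k, b n) * r k = 0 := by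
    intro k
    rw [Finset.sum_mul]
    refine Finset.sum_eq_zero fun n hn => ?_
    have hnk := Finset.mem_range.mp hn
    have hsb : Summable fun m => b (m + k) := hsum.comp_injective (add_left_injective k)
    rw [hr_def]
    rw [← hsb.tsum_mul_left (b n)]
    rw [tsum_congr fun m => horth n (m + k) (by omega)]
    exact tsum_zero
  -- the key quantities
  set T : ℕ → ℕ → ℝ≥0∞ := fun k n => τ (cfcₙ (fCut (ε k)) (b n)) with hT_def
  have hfc : ∀ k, Continuous (fCut (ε k)) := fun k => fCut_continuous (hε_pos k)
  have hf0 : ∀ k, fCut (ε k) 0 = 0 := fun k => fCut_zero (hε_pos k)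
  -- dFun as iSup over our levels
  have hdFun : ∀ a : B, dFun τ a = ⨆ k : ℕ, τ (cfcₙ (fCut (ε k)) a) := fun a => rfl
  -- key computation: τ(f_k(y)) is the k-th partial sum of the T's
  have key1 : ∀ k, τ (cfcₙ (fCut (ε k)) y) = ∑ n ∈ Finset.range k, T k n := by
    intro k
    have hs_nonneg : 0 ≤ ∑ n ∈ Finset.range k, b n :=
      Finset.sum_nonneg fun n _ => hpos n
    rw [hy_split k,
      cfcₙ_add_of_orth hs_nonneg (hr_nonneg k) (hsr k) _ (hfc k) (hf0 k),
      cfcₙ_eq_zero_of_norm_le (hr_nonneg k) (hε_pos k) (hr_small k), add_zero,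
      cfcₙ_finsum_of_orth b hpos horth _ (hfc k) (hf0 k) k]
    exact tau_sum τ hτ0 hτadd _
      (fun n => cfcₙ_nonneg fun t _ => fCut_nonneg _ _)
      (fun n m hnm => cfcₙ_mul_eq_zero_of_orth (hpos n) (hpos m) (horth n m hnm)
        _ _ (hfc k) (hfc k) (hf0 k) (hf0 k)) k
  -- monotonicity of T in the level k
  have hT_mono : ∀ n, Monotone fun k => T k n := by
    intro n j k hjk
    refine tau_cfcₙ_mono τ hτadd (hpos n) (hfc j) (hfc k) (hf0 j) (hf0 k) ?_
      (fun t => fCut_nonneg _ _)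
    intro t ht
    have ht0 : 0 ≤ t := quasispectrum_nonneg_of_nonneg (b n) (hpos n) t ht
    refine fCut_mono_eps (hε_pos k) ?_ ht0
    rw [hε_def]
    apply one_div_le_one_div_of_le (by positivity)
    exact_mod_cast add_le_add_left (Nat.cast_le.mpr hjk) 1
  -- dFun of each b n
  have hdb : ∀ n, dFun τ (b n) = ⨆ k, T k n := fun n => rfl
  -- the two inequalities
  have hle : dFun τ y ≤ ∑' n, dFun τ (b n) := by
    rw [hdFun y]
    refine iSup_le fun k => ?_
    rw [key1 k]
    calc ∑ n ∈ Finset.range k, T k n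
        ≤ ∑ n ∈ Finset.range k, dFun τ (b n) := by
          refine Finset.sum_le_sum fun n _ => ?_
          rw [hdb n]
          exact le_iSup (fun j => T j n) k
      _ ≤ ∑' n, dFun τ (b n) := ENNReal.sum_le_tsum _
  have hge : ∑' n, dFun τ (b n) ≤ dFun τ y := by
    rw [ENNReal.tsum_eq_iSup_nat]
    refine iSup_le fun N => ?_
    have hswap : ∑ n ∈ Finset.range N, dFun τ (b n)
        = ⨆ k, ∑ n ∈ Finset.range N, T k n := by
      rw [Finset.sum_congr rfl fun n _ => hdb n]
      exact ENNReal.finsetSum_iSup_of_monotone fun n => hT_mono n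
    rw [hswap]
    refine iSup_le fun k => ?_
    have hstep : ∑ n ∈ Finset.range N, T k n
        ≤ ∑ n ∈ Finset.range (max k N), T (max k N) n := by
      refine le_trans (Finset.sum_le_sum fun n _ => hT_mono n (le_max_left k N)) ?_
      exact Finset.sum_le_sum_of_subset (Finset.range_subset_range.mpr (le_max_right k N))
    refine hstep.trans ?_
    rw [← key1 (max k N), hdFun y]
    exact le_iSup (fun j => τ (cfcₙ (fCut (ε j)) y)) (max k N)
  exact le_antisymm hle hge
end
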